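/- Let v : ℝⁿ → [0,∞) be a Lebesgue measurable function with ℒⁿ({v > 0}) < ∞. Assume {v^∧ = 0} does not essentially disconnect {v > 0}, and ℋ^{n-1}(∂{v^∧ > 0} \ {v^∧ = 0}) = 0, where ∂ denotes the topological boundary. Then the set Ω := ℝⁿ \ closure({v^∧ = 0}) is open and connected, and ℋ^{n-1}({v^∧ > 0} Δ Ω) = 0. -/

import Mathlib

/-!
Since `v^∧ ≥ 0`, the set `Ω` is the interior of `P := {v^∧ > 0}`, so `P Δ Ω = ∂P \ {v^∧ = 0}` is
`ℋ^{n-1}`-null. By Lebesgue's density theorem `{v > 0}` and `P`, hence also `{v > 0}` and `Ω`,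
agree up to a Lebesgue-null set. A splitting of `Ω` into two disjoint nonempty open pieces is
then a nontrivial partition of `{v > 0}`; the common essential boundary of the pieces misses `Ω`,
because each point of `Ω` is interior to one piece and so to the complement of the other. It
therefore lies in `closure {v^∧ = 0}`, which exceeds `{v^∧ = 0}` only by the null set
`∂P \ {v^∧ = 0}`, and `{v^∧ = 0}` would essentially disconnect `{v > 0}`.
-/

open MeasureTheory Metric Set Filter Topology ENNReal NNReal

noncomputable section

/-- The set of points where the measurable set `A` has `n`-dimensional density `t`. -/
def densityPt {X : Type*} [MetricSpace X] [MeasureSpace X] (A : Set X) (t : ℝ≥0∞) : Set X :=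
  {x | Tendsto (fun ρ : ℝ => volume (A ∩ ball x ρ) / volume (ball x ρ)) (𝓝[>] 0) (𝓝 t)}

/-- The essential boundary `∂ᵉA = X \ (A^(0) ∪ A^(1))`. -/
def essBoundary {X : Type*} [MetricSpace X] [MeasureSpace X] (A : Set X) : Set X :=
  (densityPt A 0 ∪ densityPt A 1)ᶜ

/-- Approximate lower limit `f^∧(x) = sup {t : x ∈ {f > t}^(1)}`. -/
def apLower {X : Type*} [MetricSpace X] [MeasureSpace X] (f : X → ℝ) (x : X) : EReal :=
  sSup {t : EReal | ∃ s : ℝ, t = (s : EReal) ∧ x ∈ densityPt {y | s < f y} 1}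

/-- Approximate upper limit `f^∨(x) = inf {t : x ∈ {f > t}^(0)}`. -/
def apUpper {X : Type*} [MetricSpace X] [MeasureSpace X] (f : X → ℝ) (x : X) : EReal :=
  sInf {t : EReal | ∃ s : ℝ, t = (s : EReal) ∧ x ∈ densityPt {y | s < f y} 0}

/-- `K` essentially disconnects `G`: there is a nontrivial Borel partition `{Gp, Gm}` of `G`
with `μH[d]((G^(1) ∩ ∂ᵉGp ∩ ∂ᵉGm) \ K) = 0`, where `d` is the codimension-one exponent. -/
def essentiallyDisconnects {X : Type*} [MetricSpace X] [MeasureSpace X] [BorelSpace X]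
    (d : ℝ) (K G : Set X) : Prop :=
  ∃ Gp Gm : Set X, MeasurableSet Gp ∧ MeasurableSet Gm ∧
    volume (Gp ∩ Gm) = 0 ∧ volume (symmDiff G (Gp ∪ Gm)) = 0 ∧
    0 < volume Gp ∧ 0 < volume Gm ∧
    μH[d] ((densityPt G 1 ∩ essBoundary Gp ∩ essBoundary Gm) \ K) = 0

theorem setOf_pos_eq_iUnion {α : Type*} (f : α → ℝ) :
    {x | 0 < f x} = ⋃ k : ℕ, {x | 1 / ((k : ℝ) + 1) < f x} := by
  ext x
  simp only [mem_ofPred_eq, mem_iUnion]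
  exact ⟨exists_nat_one_div_lt, fun ⟨_, hk⟩ => Nat.one_div_pos_of_nat.trans hk⟩

section MetricMeasure

variable {X : Type*} [MetricSpace X] [MeasureSpace X]

theorem mem_densityPt_zero_of_mem_interior_compl {A : Set X} {x : X} (hx : x ∈ interior Aᶜ) :
    x ∈ densityPt A 0 := by
  obtain ⟨ε, hε, hball⟩ := Metric.mem_nhds_iff.1 (mem_interior_iff_mem_nhds.1 hx)
  refine tendsto_const_nhds.congr' ?_
  filter_upwards [Ioo_mem_nhdsGT hε] with ρ hρ
  have hempty : A ∩ ball x ρ = ∅ :=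
    (subset_compl_iff_disjoint_left.1 ((ball_subset_ball hρ.2.le).trans hball)).inter_eq
  rw [hempty, measure_empty, ENNReal.zero_div]

theorem densityPt_one_mono {A B : Set X} (h : A ⊆ B) : densityPt A 1 ⊆ densityPt B 1 :=
  fun _ hx => tendsto_of_tendsto_of_tendsto_of_le_of_le hx tendsto_const_nhds
    (fun _ => ENNReal.div_le_div_right (measure_mono (inter_subset_inter_left _ h)) _)
    (fun _ => ENNReal.div_le_of_le_mul (by rw [one_mul]; exact measure_mono inter_subset_right))

theorem mem_densityPt_univ [ProperSpace X] [IsFiniteMeasureOnCompacts (volume : Measure X)]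
    [(volume : Measure X).IsOpenPosMeasure] (x : X) : x ∈ densityPt univ 1 := by
  refine tendsto_const_nhds.congr' ?_
  filter_upwards [self_mem_nhdsWithin] with ρ (hρ : 0 < ρ)
  rw [univ_inter, ENNReal.div_self (measure_ball_pos _ x hρ).ne' measure_ball_lt_top.ne]

theorem essBoundary_inter_essBoundary_subset {U V : Set X} (hU : IsOpen U) (hV : IsOpen V)
    (hUV : Disjoint U V) : essBoundary U ∩ essBoundary V ⊆ (U ∪ V)ᶜ := by
  rintro x ⟨hxU, hxV⟩ (hx | hx)
  · exact hxV (Or.inl (mem_densityPt_zero_of_mem_interior_compl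
      (interior_maximal hUV.subset_compl_right hU hx)))
  · exact hxU (Or.inl (mem_densityPt_zero_of_mem_interior_compl
      (interior_maximal hUV.subset_compl_left hV hx)))

theorem setOf_apLower_pos_eq_iUnion (f : X → ℝ) :
    {x | 0 < apLower f x} = ⋃ k : ℕ, densityPt {y | 1 / ((k : ℝ) + 1) < f y} 1 := by
  ext x
  simp only [apLower, lt_sSup_iff, mem_ofPred_eq, mem_iUnion]
  constructor
  · rintro ⟨_, ⟨s, rfl, hs⟩, hpos⟩
    obtain ⟨k, hk⟩ := exists_nat_one_div_lt (EReal.coe_pos.1 hpos)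
    exact ⟨k, densityPt_one_mono (fun y hy => hk.trans hy) hs⟩
  · rintro ⟨k, hk⟩
    exact ⟨_, ⟨_, rfl, hk⟩, EReal.coe_pos.2 Nat.one_div_pos_of_nat⟩

theorem apLower_nonneg [ProperSpace X] [IsFiniteMeasureOnCompacts (volume : Measure X)]
    [(volume : Measure X).IsOpenPosMeasure] {f : X → ℝ} (hf : ∀ x, 0 ≤ f x) (x : X) :
    0 ≤ apLower f x := by
  by_contra! h
  obtain ⟨s, hs, hs0⟩ := EReal.exists_between_coe_real h
  have huniv : {y | s < f y} = univ :=
    eq_univ_of_forall fun y => (EReal.coe_lt_coe_iff.1 hs0).trans_le (hf y)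
  exact (le_sSup ⟨s, rfl, huniv ▸ mem_densityPt_univ x⟩ : (s : EReal) ≤ apLower f x).not_gt hs

theorem compl_setOf_apLower_eq_zero [ProperSpace X]
    [IsFiniteMeasureOnCompacts (volume : Measure X)] [(volume : Measure X).IsOpenPosMeasure]
    {f : X → ℝ} (hf : ∀ x, 0 ≤ f x) :
    {x | apLower f x = 0}ᶜ = {x | 0 < apLower f x} := by
  ext x
  simp [(apLower_nonneg hf x).lt_iff_ne, eq_comm]

theorem essentiallyDisconnects.mono_null [BorelSpace X] {d : ℝ} {B K G : Set X}
    (h : essentiallyDisconnects d B G) (hBK : μH[d] (B \ K) = 0) :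
    essentiallyDisconnects d K G := by
  obtain ⟨Gp, Gm, hp, hm, hpm, hG, hp0, hm0, hB⟩ := h
  refine ⟨Gp, Gm, hp, hm, hpm, hG, hp0, hm0, measure_mono_null ?_ (measure_union_null hB hBK)⟩
  rintro x ⟨hx, hxK⟩
  by_cases hxB : x ∈ B
  · exact Or.inr ⟨hxB, hxK⟩
  · exact Or.inl ⟨hx, hxB⟩

theorem IsOpen.isPreconnected_of_not_essentiallyDisconnects [BorelSpace X]
    [(volume : Measure X).IsOpenPosMeasure] {d : ℝ} {Ω G : Set X} (hΩ : IsOpen Ω)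
    (hG : G =ᵐ[volume] Ω) (h : ¬ essentiallyDisconnects d Ωᶜ G) : IsPreconnected Ω := by
  by_contra hΩc
  simp only [IsPreconnected, not_forall, not_nonempty_iff_eq_empty] at hΩc
  obtain ⟨U, V, hU, hV, hΩUV, hΩU, hΩV, hUV⟩ := hΩc
  have hdisj : Disjoint (Ω ∩ U) (Ω ∩ V) := by
    rw [disjoint_iff_inter_eq_empty, ← inter_inter_distrib_left, hUV]
  have hcover : Ω ∩ U ∪ Ω ∩ V = Ω := by
    rw [← inter_union_distrib_left, inter_eq_self_of_subset_left hΩUV]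
  refine h ⟨Ω ∩ U, Ω ∩ V, (hΩ.inter hU).measurableSet, (hΩ.inter hV).measurableSet,
    by rw [hdisj.inter_eq, measure_empty], by rw [hcover, measure_symmDiff_eq_zero_iff]; exact hG,
    (hΩ.inter hU).measure_pos _ hΩU, (hΩ.inter hV).measure_pos _ hΩV,
    measure_mono_null ?_ measure_empty⟩
  rintro x ⟨⟨⟨-, hxU⟩, hxV⟩, hxΩ⟩
  exact essBoundary_inter_essBoundary_subset (hΩ.inter hU) (hΩ.inter hV) hdisj ⟨hxU, hxV⟩
    (hcover.symm ▸ not_not.1 hxΩ)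

end MetricMeasure

section Topology

variable {X : Type*} [TopologicalSpace X]

theorem frontier_sdiff_self (Z : Set X) : frontier Z \ Z = closure Z \ Z := by
  rw [frontier, Set.sdiff_sdiff, union_eq_right.2 interior_subset]

theorem symmDiff_compl_compl_closure (Z : Set X) :
    symmDiff Zᶜ (closure Z)ᶜ = frontier Z \ Z := by
  rw [compl_symmDiff_compl, symmDiff_of_le subset_closure, frontier_sdiff_self]

end Topology

section AddHaar

variable {E : Type*} [NormedAddCommGroup E] [NormedSpace ℝ E] [FiniteDimensional ℝ E]
  [MeasureSpace E] [BorelSpace E] [(volume : Measure E).IsAddHaarMeasure]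

theorem measure_inter_closedBall_eq (A : Set E) (x : E) {ρ : ℝ} (hρ : ρ ≠ 0) :
    volume (A ∩ closedBall x ρ) = volume (A ∩ ball x ρ) := by
  have hball : ball x ρ =ᵐ[volume] closedBall x ρ := by
    rw [← closedBall_sdiff_sphere]
    exact sdiff_null_ae_eq_self (Measure.addHaar_sphere_of_ne_zero volume x hρ)
  exact measure_congr (EventuallyEq.rfl.inter hball.symm)

theorem densityPt_one_ae_eq {A : Set E} (hA : MeasurableSet A) :
    densityPt A 1 =ᵐ[volume] A := by
  have hdens : ∀ᵐ x, x ∈ densityPt A (A.indicator 1 x) := by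
    filter_upwards [Besicovitch.ae_tendsto_measure_inter_div_of_measurableSet volume hA]
      with x hx
    refine hx.congr' ?_
    filter_upwards [self_mem_nhdsWithin] with ρ (hρ : 0 < ρ)
    rw [measure_inter_closedBall_eq A x hρ.ne', ← univ_inter (closedBall x ρ),
      measure_inter_closedBall_eq _ x hρ.ne', univ_inter]
  filter_upwards [hdens] with x hx
  by_cases hxA : x ∈ A
  · rw [indicator_of_mem hxA] at hx
    exact propext ⟨fun _ => hxA, fun _ => hx⟩
  · rw [indicator_of_notMem hxA] at hx
    exact propext ⟨fun h1 => absurd (tendsto_nhds_unique hx h1) zero_ne_one, hxA.elim⟩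

theorem setOf_apLower_pos_ae_eq {f : E → ℝ} (hf : Measurable f) :
    {x | 0 < apLower f x} =ᵐ[volume] {x | 0 < f x} := by
  rw [setOf_apLower_pos_eq_iUnion, setOf_pos_eq_iUnion]
  exact Filter.EventuallyEq.countable_iUnion fun _ =>
    densityPt_one_ae_eq (measurableSet_lt measurable_const hf)

theorem volume_eq_zero_of_hausdorffMeasure_eq_zero {d : ℝ} (hd : d < Module.finrank ℝ E)
    {s : Set E} (hs : μH[d] s = 0) : volume s = 0 :=
  Measure.absolutelyContinuous_isAddHaarMeasure volume μH[Module.finrank ℝ E] <|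
    (Measure.hausdorffMeasure_zero_or_top hd s).resolve_right (by simp [hs])

end AddHaar

theorem statement6_general (n : ℕ) (v : EuclideanSpace ℝ (Fin n) → ℝ) (hmeas : Measurable v)
    (hnonneg : ∀ x, 0 ≤ v x)
    (hconn : ¬ essentiallyDisconnects ((n : ℝ) - 1) {x | apLower v x = 0} {x | 0 < v x})
    (hbdry : μH[(n : ℝ) - 1] (frontier {x | 0 < apLower v x} \ {x | apLower v x = 0}) = 0) :
    IsOpen (closure {x | apLower v x = 0})ᶜ ∧
    IsPreconnected (closure {x | apLower v x = 0})ᶜ ∧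
    μH[(n : ℝ) - 1] (symmDiff {x | 0 < apLower v x} (closure {x | apLower v x = 0})ᶜ) = 0 := by
  set Z := {x | apLower v x = 0}
  have hZc : Zᶜ = {x | 0 < apLower v x} := compl_setOf_apLower_eq_zero hnonneg
  have hΔ : symmDiff {x | 0 < apLower v x} (closure Z)ᶜ = frontier Z \ Z := by
    rw [← hZc, symmDiff_compl_compl_closure]
  rw [← hZc, frontier_compl] at hbdry
  have hΩ : IsOpen (closure Z)ᶜ := isClosed_closure.isOpen_compl
  have hG : {x | 0 < v x} =ᵐ[volume] (closure Z)ᶜ :=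
    (setOf_apLower_pos_ae_eq hmeas).symm.trans <| measure_symmDiff_eq_zero_iff.1 <|
      volume_eq_zero_of_hausdorffMeasure_eq_zero (by simp) (hΔ ▸ hbdry)
  have hnot : ¬ essentiallyDisconnects ((n : ℝ) - 1) (closure Z)ᶜᶜ {x | 0 < v x} := by
    refine fun h => hconn (h.mono_null (measure_mono_null ?_ hbdry))
    rw [compl_compl, ← frontier_sdiff_self]
  exact ⟨hΩ, hΩ.isPreconnected_of_not_essentiallyDisconnects hG hnot, hΔ ▸ hbdry⟩

/-- Let `v : ℝⁿ → [0,∞)` be Lebesgue measurable with `ℒⁿ({v>0}) < ∞`.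
Assume `{v^∧ = 0}` does not essentially disconnect `{v > 0}`, and
`ℋ^{n-1}(∂{v^∧ > 0} \ {v^∧ = 0}) = 0` (topological boundary). Then
`Ω := ℝⁿ \ closure({v^∧ = 0})` is open and connected, and `ℋ^{n-1}({v^∧ > 0} Δ Ω) = 0`. -/
theorem statement6 (n : ℕ) (v : EuclideanSpace ℝ (Fin n) → ℝ) (hmeas : Measurable v)
    (hnonneg : ∀ x, 0 ≤ v x) (hfin : volume {x | 0 < v x} < ⊤)
    (hconn : ¬ essentiallyDisconnects ((n : ℝ) - 1) {x | apLower v x = 0} {x | 0 < v x})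
    (hbdry : μH[(n : ℝ) - 1] (frontier {x | 0 < apLower v x} \ {x | apLower v x = 0}) = 0) :
    IsOpen (closure {x | apLower v x = 0})ᶜ ∧
    IsPreconnected (closure {x | apLower v x = 0})ᶜ ∧
    μH[(n : ℝ) - 1] (symmDiff {x | 0 < apLower v x} (closure {x | apLower v x = 0})ᶜ) = 0 :=
  statement6_general n v hmeas hnonneg hconn hbdry
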